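/- arXiv:1710.09755 — 2 statements merged into one kernel-verified Lean document; each statement's English description precedes it below -/
import Mathlib

section
/- Let D be a square-free positive integer with D ≡ 1 (mod 4) or D ≡ 2 (mod 4), and let n > 1 be an odd integer such that n·a^(n−1) ≢ 1 (mod D) and n·a^(n−1) ≢ −1 (mod D) for every integer a. If n is coprime to the class number h of the imaginary quadratic field ℚ(√−D), then the Diophantine equation x² + D = yⁿ has no integer solutions (x, y). -/
/-!
Put `θ = √−D`. Since `D ≡ 1, 2 (mod 4)`, the ring of integers of `ℚ(θ)` is `ℤ[θ]`, and since
`D ≥ 2` (for `D = 1` every congruence holds) its units are `±1`. A solution of `x² + D = yⁿ`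
gives `(x + θ)(x - θ) = yⁿ`, and the two factors are coprime because `y` is prime to
`4D = -(2θ)²`. Hence the ideal `(x + θ)` is an `n`-th power, of a principal ideal as `n` is prime
to the class number, and as `n` is odd the unit can be absorbed: `x + θ = (a + bθ)ⁿ`. The
`θ`-coordinate of `(a + bθ)ⁿ` is `b (n aⁿ⁻¹ + D f)` for some integer `f`, so `b = ±1` and
`n aⁿ⁻¹ ≡ ±1 (mod D)`.
-/

open IntermediateField NumberField

theorem IsCoprime.of_mul_sub_sq {R : Type*} [CommRing R] {a b : R}
    (h : IsCoprime (a * b) ((a - b) ^ 2)) : IsCoprime a b := by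
  have ha : IsCoprime a (b ^ 2 + a * (a - 2 * b)) := by
    convert h.of_mul_left_left using 1; ring
  exact (IsCoprime.pow_right_iff two_pos).mp ha.of_add_mul_left_right

theorem IsDedekindDomain.exists_associated_pow_of_mul_eq_pow {R : Type*} [CommRing R]
    [IsDedekindDomain R] [Finite (ClassGroup R)] {n : ℕ}
    (hn : n.Coprime (Nat.card (ClassGroup R))) {a b c : R} (hab : IsCoprime a b)
    (h : a * b = c ^ n) : ∃ β : R, Associated (β ^ n) a := by
  have := Fintype.ofFinite (ClassGroup R)
  rw [Nat.card_eq_fintype_card] at hn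
  obtain ⟨A, hA⟩ := exists_eq_pow_of_mul_eq_pow_of_coprime
    ((Ideal.isCoprime_span_singleton_iff a b).mpr hab)
    (c := Ideal.span {c}) (by rw [Ideal.span_singleton_mul_span_singleton, h,
      Ideal.span_singleton_pow])
  obtain ⟨β, rfl⟩ := (Ideal.IsPrincipal.of_isPrincipal_pow_of_coprime hn
    (I := A) (hA ▸ ⟨a, rfl⟩)).principal
  refine ⟨β, Ideal.span_singleton_eq_span_singleton.mp ?_⟩
  rw [← Ideal.span_singleton_pow, Ideal.submodule_span_eq] at *
  exact hA.symm

theorem Zsqrtd.eq_one_or_neg_one_of_isUnit {d : ℤ} (hd : d < -1) {z : ℤ√d} (hz : IsUnit z) :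
    z = 1 ∨ z = -1 := by
  have hnorm := (Zsqrtd.norm_eq_one_iff' (by omega) z).mpr hz
  rw [Zsqrtd.norm_def] at hnorm
  have him : z.im = 0 := by nlinarith [mul_self_nonneg z.re, mul_self_nonneg z.im]
  rw [him, mul_zero, sub_zero, mul_self_eq_one_iff] at hnorm
  rcases hnorm with h | h
  · left; ext <;> simp [h, him]
  · right; ext <;> simp [h, him]

theorem Zsqrtd.exists_pow_eq_of_associated {d : ℤ} (hd : d < -1) {n : ℕ} (hn : Odd n)
    {β ξ : ℤ√d} (h : Associated (β ^ n) ξ) : ∃ z : ℤ√d, z ^ n = ξ := by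
  obtain ⟨u, rfl⟩ := h
  rcases Zsqrtd.eq_one_or_neg_one_of_isUnit hd u.isUnit with hu | hu
  · exact ⟨β, by rw [hu, mul_one]⟩
  · exact ⟨-β, by rw [hu, hn.neg_pow, mul_neg_one]⟩

theorem Zsqrtd.exists_re_im_pow_succ {d : ℤ} (z : ℤ√d) (n : ℕ) : ∃ e f : ℤ,
    (z ^ (n + 1)).re = z.re ^ (n + 1) + d * e ∧
      (z ^ (n + 1)).im = z.im * ((n + 1) * z.re ^ n + d * f) := by
  induction n with
  | zero => exact ⟨0, 0, by simp⟩
  | succ n ih =>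
    obtain ⟨e, f, hre, him⟩ := ih
    refine ⟨e * z.re + z.im ^ 2 * ((n + 1) * z.re ^ n + d * f), e + f * z.re, ?_, ?_⟩
    · rw [pow_succ, Zsqrtd.re_mul, hre, him]; ring
    · rw [pow_succ, Zsqrtd.im_mul, hre, him]; push_cast; ring

theorem Int.two_dvd_of_four_dvd_sq_add_mul_sq {D r s : ℤ} (hD : D % 4 = 1 ∨ D % 4 = 2)
    (h : 4 ∣ r ^ 2 + D * s ^ 2) : 2 ∣ r ∧ 2 ∣ s := by
  have key : ∀ u v d : ZMod 4, (d = 1 ∨ d = 2) → u ^ 2 + d * v ^ 2 = 0 →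
      2 * u = 0 ∧ 2 * v = 0 := by decide
  have hD' : (D : ZMod 4) = 1 ∨ (D : ZMod 4) = 2 := by
    rw [← ZMod.intCast_mod D 4]
    rcases hD with hD | hD <;> simp [hD]
  have h4 : ((r ^ 2 + D * s ^ 2 : ℤ) : ZMod 4) = 0 :=
    (ZMod.intCast_zmod_eq_zero_iff_dvd _ 4).mpr (by exact_mod_cast h)
  push_cast at h4
  have four_dvd (t : ℤ) (ht : 2 * (t : ZMod 4) = 0) : (4 : ℤ) ∣ 2 * t :=
    (ZMod.intCast_zmod_eq_zero_iff_dvd (2 * t) 4).mp (by push_cast; exact ht)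
  obtain ⟨hr, hs⟩ := key _ _ _ hD' h4
  have := four_dvd r hr
  have := four_dvd s hs
  constructor <;> omega

theorem Rat.exists_intCast_eq_of_squarefree_mul_sq {D : ℕ} (hD : Squarefree D) {t : ℚ} {k : ℤ}
    (h : (D : ℚ) * t ^ 2 = k) : ∃ s : ℤ, (s : ℚ) = t := by
  refine ⟨t.num, ?_⟩
  suffices hden : t.den = 1 by
    rw [← Rat.num_div_den t, hden]; simp
  have hnum : (D : ℤ) * t.num ^ 2 = t.den ^ 2 * k := by
    rw [← Rat.num_div_den t] at h
    field_simp at h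
    exact_mod_cast h
  have hdvd : t.den ^ 2 ∣ D * t.num.natAbs ^ 2 := by
    simpa [Int.natAbs_mul, Int.natAbs_pow] using Int.natAbs_dvd_natAbs.mpr (Dvd.intro _ hnum.symm)
  have hcop : (t.den ^ 2).Coprime (t.num.natAbs ^ 2) := Nat.Coprime.pow 2 2 t.reduced.symm
  simpa using hD t.den (sq t.den ▸ hcop.dvd_of_dvd_mul_right hdvd)

theorem Rat.exists_intCast_eq_of_isIntegral {K : Type*} [Field K] [CharZero K] {q : ℚ}
    (h : IsIntegral ℤ (q : K)) : ∃ r : ℤ, (r : ℚ) = q :=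
  IsIntegrallyClosed.isIntegral_iff.mp
    ((isIntegral_algebraMap_iff (algebraMap ℚ K).injective).mp h)

theorem Int.isCoprime_four_mul_of_sq_add_eq_pow {D : ℕ} (hD : Squarefree D)
    (hDmod : D % 4 = 1 ∨ D % 4 = 2) {n : ℕ} (hn : 2 ≤ n) {x y : ℤ} (h : x ^ 2 + D = y ^ n) :
    IsCoprime y (4 * D) := by
  rw [Int.isCoprime_iff_gcd_eq_one]
  by_contra hg
  obtain ⟨p, hp, hpg⟩ := Nat.exists_prime_and_dvd hg
  have hpZ : Prime (p : ℤ) := Nat.prime_iff_prime_int.mp hp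
  have hpy : (p : ℤ) ∣ y := (Int.natCast_dvd_natCast.mpr hpg).trans (Int.gcd_dvd_left _ _)
  have hp4D : (p : ℤ) ∣ 4 * D := (Int.natCast_dvd_natCast.mpr hpg).trans (Int.gcd_dvd_right _ _)
  have hp2 : (p : ℤ) ^ 2 ∣ x ^ 2 + D := h ▸ (pow_dvd_pow_of_dvd hpy 2).trans (pow_dvd_pow y hn)
  rcases hpZ.dvd_or_dvd hp4D with hp4 | hpD
  · have hp2' : (p : ℤ) ∣ 2 := hpZ.dvd_of_dvd_pow (n := 2) (by norm_num [hp4])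
    have : p = 2 := (Nat.prime_dvd_prime_iff_eq hp Nat.prime_two).mp (by exact_mod_cast hp2')
    subst this
    have := Int.two_dvd_of_four_dvd_sq_add_mul_sq (r := x) (s := 1) (D := D) (by omega)
      (by simpa using hp2)
    omega
  · have hpx : (p : ℤ) ∣ x :=
      hpZ.dvd_of_dvd_pow ((dvd_add_left hpD).mp ((dvd_pow_self _ two_ne_zero).trans hp2))
    have hp2D : (p : ℤ) * p ∣ D := by
      rw [← sq]; exact (dvd_add_right (pow_dvd_pow_of_dvd hpx 2)).mp hp2
    exact hpZ.not_isUnit (Int.squarefree_natCast.mpr hD _ hp2D)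

theorem Int.modEq_one_or_modEq_neg_one_of_mul_eq_one {b c d f : ℤ} (h : b * (c + d * f) = 1) :
    c ≡ 1 [ZMOD d] ∨ c ≡ -1 [ZMOD d] := by
  rcases Int.isUnit_iff.mp (IsUnit.of_mul_eq_one_right _ h) with hc | hc
  · exact Or.inl (Int.modEq_iff_dvd.mpr ⟨f, by linear_combination -hc⟩)
  · exact Or.inr (Int.modEq_iff_dvd.mpr ⟨f, by linear_combination -hc⟩)

noncomputable def sqrtNeg (D : ℕ) : ℂ := Complex.I * Real.sqrt D

section

variable (D : ℕ)

theorem sqrtNeg_mul_self : sqrtNeg D * sqrtNeg D = -D := by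
  have h : (Real.sqrt D : ℂ) * Real.sqrt D = D := by
    rw [← Complex.ofReal_mul, Real.mul_self_sqrt (Nat.cast_nonneg D), Complex.ofReal_natCast]
  rw [sqrtNeg, mul_mul_mul_comm, Complex.I_mul_I, h, neg_one_mul]

theorem conj_sqrtNeg : starRingEnd ℂ (sqrtNeg D) = -sqrtNeg D := by
  simp [sqrtNeg]

theorem isIntegral_sqrtNeg : IsIntegral ℤ (sqrtNeg D) :=
  ⟨Polynomial.X ^ 2 + Polynomial.C (D : ℤ), Polynomial.monic_X_pow_add_C _ two_ne_zero, by
    simp [sq, sqrtNeg_mul_self]⟩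

instance : FiniteDimensional ℚ ℚ⟮sqrtNeg D⟯ :=
  adjoin.finiteDimensional (isIntegral_sqrtNeg D).tower_top

instance : NumberField ℚ⟮sqrtNeg D⟯ where

theorem exists_rat_eq_of_mem_adjoin_sqrtNeg {z : ℂ} (hz : z ∈ ℚ⟮sqrtNeg D⟯) :
    ∃ p q : ℚ, z = p + q * sqrtNeg D := by
  rw [← mem_toSubalgebra, adjoin_simple_toSubalgebra_of_isAlgebraic
    (isIntegral_sqrtNeg D).tower_top.isAlgebraic] at hz
  induction hz using Algebra.adjoin_induction with
  | mem x hx => exact ⟨0, 1, by rw [Set.mem_singleton_iff.mp hx]; simp⟩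
  | algebraMap r => exact ⟨r, 0, by simp⟩
  | add x y _ _ hx hy =>
    obtain ⟨p, q, rfl⟩ := hx
    obtain ⟨p', q', rfl⟩ := hy
    exact ⟨p + p', q + q', by push_cast; ring⟩
  | mul x y _ _ hx hy =>
    obtain ⟨p, q, rfl⟩ := hx
    obtain ⟨p', q', rfl⟩ := hy
    refine ⟨p * p' - D * q * q', p * q' + q * p', ?_⟩
    push_cast
    linear_combination (q * q' : ℂ) * sqrtNeg_mul_self D

theorem coe_ringOfIntegers_sqrtNeg_injective :
    Function.Injective (fun r : 𝓞 ℚ⟮sqrtNeg D⟯ => ((r : ℚ⟮sqrtNeg D⟯) : ℂ)) :=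
  Subtype.val_injective.comp RingOfIntegers.coe_injective

noncomputable def sqrtNegInt : 𝓞 ℚ⟮sqrtNeg D⟯ :=
  ⟨⟨sqrtNeg D, mem_adjoin_simple_self ℚ _⟩,
    (isIntegral_algebraMap_iff (algebraMap ℚ⟮sqrtNeg D⟯ ℂ).injective).mp (isIntegral_sqrtNeg D)⟩

@[simp]
theorem coe_coe_sqrtNegInt : ((sqrtNegInt D : ℚ⟮sqrtNeg D⟯) : ℂ) = sqrtNeg D := rfl

noncomputable def zsqrtdToRingOfIntegers : ℤ√(-D) →+* 𝓞 ℚ⟮sqrtNeg D⟯ :=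
  Zsqrtd.lift ⟨sqrtNegInt D,
    coe_ringOfIntegers_sqrtNeg_injective D (by simpa using sqrtNeg_mul_self D)⟩

theorem coe_coe_zsqrtdToRingOfIntegers (z : ℤ√(-D)) :
    ((zsqrtdToRingOfIntegers D z : ℚ⟮sqrtNeg D⟯) : ℂ) = z.re + z.im * sqrtNeg D := by
  simp [zsqrtdToRingOfIntegers, Zsqrtd.lift_apply_apply]

end

theorem exists_int_eq_add_mul_sqrtNeg_of_isIntegral {D : ℕ} (hD : Squarefree D)
    (hDmod : D % 4 = 1 ∨ D % 4 = 2) {z : ℂ} (hz : z ∈ ℚ⟮sqrtNeg D⟯) (hint : IsIntegral ℤ z) :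
    ∃ a b : ℤ, z = a + b * sqrtNeg D := by
  obtain ⟨p, q, rfl⟩ := exists_rat_eq_of_mem_adjoin_sqrtNeg D hz
  have hconj : IsIntegral ℤ ((p : ℂ) - q * sqrtNeg D) := by
    simpa [conj_sqrtNeg, sub_eq_add_neg] using hint.map (starRingEnd ℂ).toIntAlgHom
  have htrace : ((2 * p : ℚ) : ℂ) = (p + q * sqrtNeg D) + (p - q * sqrtNeg D) := by
    push_cast; ring
  have hnorm : ((p ^ 2 + D * q ^ 2 : ℚ) : ℂ) = (p + q * sqrtNeg D) * (p - q * sqrtNeg D) := by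
    push_cast; linear_combination (q ^ 2 : ℂ) * sqrtNeg_mul_self D
  obtain ⟨r, hr⟩ := Rat.exists_intCast_eq_of_isIntegral (htrace ▸ hint.add hconj)
  obtain ⟨m, hm⟩ := Rat.exists_intCast_eq_of_isIntegral (hnorm ▸ hint.mul hconj)
  obtain ⟨s, hs⟩ : ∃ s : ℤ, (s : ℚ) = 2 * q :=
    Rat.exists_intCast_eq_of_squarefree_mul_sq hD (k := 4 * m - r ^ 2)
      (by push_cast; rw [hr, hm]; ring)
  have h4 : 4 ∣ r ^ 2 + D * s ^ 2 :=
    ⟨m, by exact_mod_cast (by rw [hr, hs, hm]; ring : (r : ℚ) ^ 2 + D * s ^ 2 = 4 * m)⟩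
  obtain ⟨⟨a, rfl⟩, ⟨b, rfl⟩⟩ := Int.two_dvd_of_four_dvd_sq_add_mul_sq (by omega) h4
  refine ⟨a, b, ?_⟩
  have hp : p = a := by push_cast at hr; linarith
  have hq : q = b := by push_cast at hs; linarith
  simp [hp, hq]

theorem zsqrtdToRingOfIntegers_bijective {D : ℕ} (hD : Squarefree D) (hDpos : 0 < D)
    (hDmod : D % 4 = 1 ∨ D % 4 = 2) : Function.Bijective (zsqrtdToRingOfIntegers D) := by
  constructor
  · intro z w h
    have hsq : sqrtNeg D * sqrtNeg D = ((-D : ℤ) : ℂ) := by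
      rw [sqrtNeg_mul_self]; push_cast; rfl
    refine Zsqrtd.lift_injective ⟨sqrtNeg D, hsq⟩ (fun m => by nlinarith [mul_self_nonneg m]) ?_
    simpa [Zsqrtd.lift_apply_apply, coe_coe_zsqrtdToRingOfIntegers] using
      congrArg (fun r : 𝓞 ℚ⟮sqrtNeg D⟯ => ((r : ℚ⟮sqrtNeg D⟯) : ℂ)) h
  · intro r
    have hint : IsIntegral ℤ ((r : ℚ⟮sqrtNeg D⟯) : ℂ) :=
      (isIntegral_algebraMap_iff (algebraMap ℚ⟮sqrtNeg D⟯ ℂ).injective).mpr r.isIntegral_coe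
    obtain ⟨a, b, hab⟩ :=
      exists_int_eq_add_mul_sqrtNeg_of_isIntegral hD hDmod (r : ℚ⟮sqrtNeg D⟯).2 hint
    exact ⟨⟨a, b⟩, coe_ringOfIntegers_sqrtNeg_injective D
      (by simp [coe_coe_zsqrtdToRingOfIntegers, hab])⟩

noncomputable def zsqrtdEquivRingOfIntegers {D : ℕ} (hD : Squarefree D) (hDpos : 0 < D)
    (hDmod : D % 4 = 1 ∨ D % 4 = 2) : ℤ√(-D) ≃+* 𝓞 ℚ⟮sqrtNeg D⟯ :=
  RingEquiv.ofBijective _ (zsqrtdToRingOfIntegers_bijective hD hDpos hDmod)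

theorem stmt0 (D : ℕ) (hD : Squarefree D) (hDpos : 0 < D)
    (hDmod : D % 4 = 1 ∨ D % 4 = 2)
    (n : ℕ) (hn : 1 < n) (hodd : Odd n)
    (ha : ∀ a : ℤ, ¬ ((n : ℤ) * a ^ (n - 1) ≡ 1 [ZMOD (D : ℤ)]) ∧
      ¬ ((n : ℤ) * a ^ (n - 1) ≡ -1 [ZMOD (D : ℤ)]))
    (hcop : Nat.Coprime n
      (Nat.card (ClassGroup (𝓞 ℚ⟮(Complex.I * Real.sqrt D : ℂ)⟯)))) :
    ¬ ∃ x y : ℤ, x ^ 2 + (D : ℤ) = y ^ n := by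
  change n.Coprime (Nat.card (ClassGroup (𝓞 ℚ⟮sqrtNeg D⟯))) at hcop
  rintro ⟨x, y, hxy⟩
  have hD1 : D ≠ 1 := by rintro rfl; exact (ha 0).1 Int.modEq_one
  let e := zsqrtdEquivRingOfIntegers hD hDpos hDmod
  have hfactor : (⟨x, 1⟩ : ℤ√(-D)) * ⟨x, -1⟩ = (y : ℤ√(-D)) ^ n := by
    rw [← Int.cast_pow, ← hxy]; ext <;> simp [sq]
  have hcoprime : IsCoprime (⟨x, 1⟩ : ℤ√(-D)) ⟨x, -1⟩ := by
    have hdiff : ((⟨x, 1⟩ - ⟨x, -1⟩ : ℤ√(-D))) ^ 2 = ((-(4 * D) : ℤ) : ℤ√(-D)) := by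
      ext <;> simp [sq]; ring
    refine IsCoprime.of_mul_sub_sq ?_
    rw [hfactor, hdiff, ← Int.cast_pow]
    exact ((Int.isCoprime_four_mul_of_sq_add_eq_pow hD hDmod hn hxy).pow_left.neg_right).intCast
  obtain ⟨β, hβ⟩ := IsDedekindDomain.exists_associated_pow_of_mul_eq_pow hcop
    (hcoprime.map e) (by rw [← map_mul, hfactor, map_pow])
  obtain ⟨z, hz⟩ := Zsqrtd.exists_pow_eq_of_associated (d := -D) (by omega) hodd
    (by simpa using hβ.map e.symm)
  obtain ⟨m, rfl⟩ : ∃ m, n = m + 1 := ⟨n - 1, by omega⟩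
  obtain ⟨-, f, -, him⟩ := Zsqrtd.exists_re_im_pow_succ z m
  rw [hz] at him
  obtain ⟨hne1, hne2⟩ := ha z.re
  push_cast [Nat.add_sub_cancel] at hne1 hne2
  rcases Int.modEq_one_or_modEq_neg_one_of_mul_eq_one him.symm with h | h
  · exact hne1 (Int.modEq_neg.mp h)
  · exact hne2 (Int.modEq_neg.mp h)
end

section
/- Let D be a positive integer, n > 1 an odd integer, and a, b, x integers such that x + √−D = (a + b√−D)ⁿ in the ring ℤ[√−D]. Then b = 1 or b = −1, and n·a^(n−1) ≡ 1 (mod D) or n·a^(n−1) ≡ −1 (mod D). -/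
/-!
Modulo `d`, multiplication in `ℤ√d` is that of dual numbers, since `√d ^ 2 = d ≡ 0`; hence
`(a + b√d) ^ n ≡ a ^ n + n a ^ (n - 1) b √d`. The `√d`-coefficient of `(a + b√d) ^ n` is also
divisible by `b`. If it equals `1`, then `b` is a unit and `1 ≡ n a ^ (n - 1) b [ZMOD d]`.
-/

namespace Zsqrtd

variable {d : ℤ}

theorem im_dvd_im_pow (z : ℤ√d) (m : ℕ) : z.im ∣ (z ^ m).im := by
  induction m with
  | zero => simp
  | succ k ih =>
    rw [pow_succ, im_mul]
    exact dvd_add (dvd_mul_left _ _) (ih.mul_right _)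

theorem re_pow_modEq (z : ℤ√d) (m : ℕ) : (z ^ m).re ≡ z.re ^ m [ZMOD d] := by
  induction m with
  | zero => simp [Int.ModEq.refl]
  | succ k ih =>
    rw [pow_succ, re_mul, pow_succ]
    have hd : d * (z ^ k).im * z.im ≡ 0 [ZMOD d] :=
      Int.modEq_zero_iff_dvd.mpr ⟨(z ^ k).im * z.im, by ring⟩
    simpa using (ih.mul_right z.re).add hd

theorem im_pow_modEq (z : ℤ√d) (m : ℕ) :
    (z ^ m).im ≡ m * z.re ^ (m - 1) * z.im [ZMOD d] := by
  induction m with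
  | zero => simp [Int.ModEq.refl]
  | succ k ih =>
    rw [pow_succ, im_mul]
    have hpow : (k : ℤ) * z.re ^ (k - 1) * z.re = k * z.re ^ k := by
      rcases k with _ | k
      · simp
      · simp [pow_succ, mul_assoc]
    calc (z ^ k).re * z.im + (z ^ k).im * z.re
        ≡ z.re ^ k * z.im + k * z.re ^ (k - 1) * z.im * z.re [ZMOD d] :=
          ((re_pow_modEq z k).mul_right _).add (ih.mul_right _)
      _ = ((k + 1 : ℕ) : ℤ) * z.re ^ (k + 1 - 1) * z.im := by
          rw [Nat.add_sub_cancel]; push_cast; linear_combination z.im * hpow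

end Zsqrtd

theorem stmt8_general (D : ℕ) (n : ℕ)
    (a b x : ℤ)
    (h : (⟨x, 1⟩ : ℤ√(-(D : ℤ))) = (⟨a, b⟩ : ℤ√(-(D : ℤ))) ^ n) :
    (b = 1 ∨ b = -1) ∧
      ((n : ℤ) * a ^ (n - 1) ≡ 1 [ZMOD (D : ℤ)] ∨
        (n : ℤ) * a ^ (n - 1) ≡ -1 [ZMOD (D : ℤ)]) := by
  have him : (1 : ℤ) = ((⟨a, b⟩ : ℤ√(-(D : ℤ))) ^ n).im := by rw [← h]
  have hb : b = 1 ∨ b = -1 :=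
    Int.isUnit_iff.mp (isUnit_of_dvd_one (him ▸ Zsqrtd.im_dvd_im_pow ⟨a, b⟩ n))
  have hmod : 1 ≡ n * a ^ (n - 1) * b [ZMOD -(D : ℤ)] := him ▸ Zsqrtd.im_pow_modEq ⟨a, b⟩ n
  rw [Int.modEq_neg] at hmod
  refine ⟨hb, ?_⟩
  rcases hb with rfl | rfl
  · exact .inl (by simpa using hmod.symm)
  · exact .inr (by simpa using hmod.symm.neg)

theorem stmt8 (D : ℕ) (hDpos : 0 < D) (n : ℕ) (hn : 1 < n) (hodd : Odd n)
    (a b x : ℤ)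
    (h : (⟨x, 1⟩ : ℤ√(-(D : ℤ))) = (⟨a, b⟩ : ℤ√(-(D : ℤ))) ^ n) :
    (b = 1 ∨ b = -1) ∧
      ((n : ℤ) * a ^ (n - 1) ≡ 1 [ZMOD (D : ℤ)] ∨
        (n : ℤ) * a ^ (n - 1) ≡ -1 [ZMOD (D : ℤ)]) :=
  stmt8_general D n a b x h
end
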